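/- Let ν ∈ (0,1), R > 0, and a > 0 satisfy cos(aR − νπ/2 + π/4) ≠ 0 and cos(aR + νπ/2 + π/4) ≠ 0. Then for z = a + iy with y ∈ ℝ, the quotient cos(zR − νπ/2 + π/4)/cos(zR + νπ/2 + π/4) equals C·(1 + e^{-2|Im(zR)|}C′/(1 + e^{-2|Im(zR)|}C″)) with C = exp(i·sign(Im z)·νπ), and in particular the quotient tends to C ≠ 0 as |Im z| → ∞; consequently its modulus is bounded above and below by positive constants depending only on a, ν, R on the vertical line Re z = a. -/

import Mathlib

/-! With `t = y R` and `s = sign t`, evenness of `cos` gives `cos (θ + i t) = cos (s θ + i |t|)`,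
and `cos (φ + i τ) = e^{τ - i φ} (1 + e^{-2τ} e^{2 i φ}) / 2`. In the quotient the factor
`e^{|t|} / 2` cancels, leaving `e^{i s νπ}` times a ratio that tends to `1` as `e^{-2|t|} → 0`.
The quotient is continuous and never vanishes (the zeros of `cos` are real), and its limits at
`±∞` are nonzero, so its modulus and the modulus of its inverse are bounded on the whole line. -/

open Filter Topology

/-- The cosine quotient appearing in the asymptotics of `F(z)` on the line `Re z = a`. -/
noncomputable def cosQuot (ν R a : ℝ) (y : ℝ) : ℂ :=
  Complex.cos (((a : ℂ) + (y : ℂ) * Complex.I) * (R : ℂ) -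
      (ν : ℂ) * (Real.pi : ℂ) / 2 + (Real.pi : ℂ) / 4) /
    Complex.cos (((a : ℂ) + (y : ℂ) * Complex.I) * (R : ℂ) +
      (ν : ℂ) * (Real.pi : ℂ) / 2 + (Real.pi : ℂ) / 4)

open Complex

namespace Complex

theorem cos_add_mul_I_eq_exp_mul (w t : ℂ) :
    cos (w + t * I) = exp (t - w * I) / 2 * (1 + exp (-2 * t) * exp (2 * w * I)) := by
  have hI : (w + t * I) * I = -(t - w * I) := by ring_nf; rw [I_sq]; ring
  have hprod : exp (t - w * I) * (exp (-2 * t) * exp (2 * w * I)) = exp (-(t - w * I)) := by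
    rw [← exp_add, ← exp_add]; ring_nf
  rw [cos, neg_mul, hI, neg_neg]
  linear_combination -hprod / 2

theorem cos_div_cos_add_mul_I (φ₁ φ₂ τ : ℂ) (h : cos (φ₂ + τ * I) ≠ 0) :
    cos (φ₁ + τ * I) / cos (φ₂ + τ * I) =
      exp ((φ₂ - φ₁) * I) * (1 + exp (-2 * τ) * (exp (2 * φ₁ * I) - exp (2 * φ₂ * I)) /
        (1 + exp (-2 * τ) * exp (2 * φ₂ * I))) := by
  simp only [cos_add_mul_I_eq_exp_mul] at h ⊢
  have hD := right_ne_zero_of_mul h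
  have hE : exp (τ - φ₁ * I) = exp ((φ₂ - φ₁) * I) * exp (τ - φ₂ * I) := by
    rw [← exp_add]; ring_nf
  calc _ = exp ((φ₂ - φ₁) * I) * ((1 + exp (-2 * τ) * exp (2 * φ₁ * I)) /
        (1 + exp (-2 * τ) * exp (2 * φ₂ * I))) := by
        rw [hE]; field_simp
    _ = _ := by rw [one_add_div hD]; ring

theorem cos_ofReal_add_mul_I_eq_sign (θ t : ℝ) (ht : t ≠ 0) :
    cos (θ + t * I) = cos (↑(Real.sign t * θ) + ↑|t| * I) := by
  rcases ht.lt_or_gt with ht | ht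
  · rw [Real.sign_of_neg ht, abs_of_neg ht, ← cos_neg]
    congr 1; push_cast; ring
  · rw [Real.sign_of_pos ht, abs_of_pos ht, one_mul]

theorem cos_ofReal_add_mul_I_ne_zero {θ : ℝ} (h : Real.cos θ ≠ 0) (t : ℝ) :
    cos (θ + t * I) ≠ 0 := by
  rw [Ne, cos_eq_zero_iff]
  rintro ⟨k, hk⟩
  have ht : t = 0 := by simpa using congrArg im hk
  have hθ : θ = (2 * k + 1) * Real.pi / 2 := by
    simpa [ht] using congrArg re hk
  exact h (Real.cos_eq_zero_iff.2 ⟨k, hθ⟩)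

end Complex

theorem tendsto_mul_one_add_div {α : Type*} {l : Filter α} {r : α → ℂ}
    (hr : Tendsto r l (𝓝 0)) (C E₁ E₂ : ℂ) :
    Tendsto (fun x => C * (1 + r x * (E₁ - E₂) / (1 + r x * E₂))) l (𝓝 C) := by
  have hnum : Tendsto (fun x => r x * (E₁ - E₂)) l (𝓝 0) := by
    simpa using hr.mul_const (E₁ - E₂)
  have hden : Tendsto (fun x => 1 + r x * E₂) l (𝓝 1) := by
    simpa using (hr.mul_const E₂).const_add 1
  simpa using (hnum.div hden one_ne_zero).const_add 1 |>.const_mul C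

theorem Continuous.exists_norm_le_of_tendsto {E : Type*} [SeminormedAddCommGroup E]
    {f : ℝ → E} (hf : Continuous f) {l₁ l₂ : E}
    (htop : Tendsto f atTop (𝓝 l₁)) (hbot : Tendsto f atBot (𝓝 l₂)) :
    ∃ C, ∀ y, ‖f y‖ ≤ C := by
  obtain ⟨C, hC⟩ := isBounded_iff_forall_norm_le.1 <|
    hf.isBounded_range_iff_isBigO_atTop_atBot.2 ⟨htop.isBigO_one ℝ, hbot.isBigO_one ℝ⟩
  exact ⟨C, fun y => hC _ ⟨y, rfl⟩⟩

theorem Continuous.exists_pos_le_norm_le_of_tendsto {𝕜 : Type*} [NormedDivisionRing 𝕜]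
    {f : ℝ → 𝕜} (hf : Continuous f) (hf₀ : ∀ y, f y ≠ 0) {l₁ l₂ : 𝕜} (hl₁ : l₁ ≠ 0)
    (hl₂ : l₂ ≠ 0) (htop : Tendsto f atTop (𝓝 l₁)) (hbot : Tendsto f atBot (𝓝 l₂)) :
    ∃ c₁ c₂ : ℝ, 0 < c₁ ∧ ∀ y, c₁ ≤ ‖f y‖ ∧ ‖f y‖ ≤ c₂ := by
  obtain ⟨c₂, hc₂⟩ := hf.exists_norm_le_of_tendsto htop hbot
  obtain ⟨C, hC⟩ := (hf.inv₀ hf₀).exists_norm_le_of_tendsto (htop.inv₀ hl₁) (hbot.inv₀ hl₂)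
  have hC₀ : 0 < C := (norm_pos_iff.2 (inv_ne_zero (hf₀ 0))).trans_le (hC 0)
  refine ⟨C⁻¹, c₂, inv_pos.2 hC₀, fun y => ⟨?_, hc₂ y⟩⟩
  have hy : ‖f y‖⁻¹ ≤ C := by simpa only [Pi.inv_apply, norm_inv] using hC y
  exact inv_le_of_inv_le₀ (norm_pos_iff.2 (hf₀ y)) hy

theorem cosQuot_eq_cos_div_cos (ν R a y : ℝ) :
    cosQuot ν R a y =
      cos (↑(a * R - ν * Real.pi / 2 + Real.pi / 4) + ↑(y * R) * I) /
        cos (↑(a * R + ν * Real.pi / 2 + Real.pi / 4) + ↑(y * R) * I) := by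
  unfold cosQuot
  congr 2 <;> push_cast <;> ring

theorem continuous_cosQuot {ν R a : ℝ}
    (h2 : Real.cos (a * R + ν * Real.pi / 2 + Real.pi / 4) ≠ 0) :
    Continuous (cosQuot ν R a) := by
  simp only [funext (cosQuot_eq_cos_div_cos ν R a)]
  exact .div (by fun_prop) (by fun_prop) fun y => cos_ofReal_add_mul_I_ne_zero h2 _

theorem cosQuot_ne_zero {ν R a : ℝ}
    (h1 : Real.cos (a * R - ν * Real.pi / 2 + Real.pi / 4) ≠ 0)
    (h2 : Real.cos (a * R + ν * Real.pi / 2 + Real.pi / 4) ≠ 0) (y : ℝ) :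
    cosQuot ν R a y ≠ 0 := by
  rw [cosQuot_eq_cos_div_cos]
  exact div_ne_zero (cos_ofReal_add_mul_I_ne_zero h1 _) (cos_ofReal_add_mul_I_ne_zero h2 _)

theorem cosQuot_eq {ν R a y : ℝ} (hR : 0 < R)
    (h2 : Real.cos (a * R + ν * Real.pi / 2 + Real.pi / 4) ≠ 0) (hy : y ≠ 0) :
    cosQuot ν R a y =
      exp (I * Real.sign y * ν * Real.pi) *
        (1 + (Real.exp (-2 * |y * R|) : ℂ) *
            (exp (I * Real.sign y * ((2 * a * R - ν * Real.pi + Real.pi / 2 : ℝ) : ℂ)) -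
              exp (I * Real.sign y * ((2 * a * R + ν * Real.pi + Real.pi / 2 : ℝ) : ℂ))) /
          (1 + (Real.exp (-2 * |y * R|) : ℂ) *
            exp (I * Real.sign y * ((2 * a * R + ν * Real.pi + Real.pi / 2 : ℝ) : ℂ)))) := by
  have hyR : y * R ≠ 0 := mul_ne_zero hy hR.ne'
  have hsign : Real.sign (y * R) = Real.sign y := by
    rcases hy.lt_or_gt with hy | hy
    · rw [Real.sign_of_neg hy, Real.sign_of_neg (mul_neg_of_neg_of_pos hy hR)]
    · rw [Real.sign_of_pos hy, Real.sign_of_pos (mul_pos hy hR)]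
  have hden := cos_ofReal_add_mul_I_ne_zero h2 (y * R)
  rw [cos_ofReal_add_mul_I_eq_sign _ _ hyR] at hden
  rw [cosQuot_eq_cos_div_cos, cos_ofReal_add_mul_I_eq_sign _ _ hyR,
    cos_ofReal_add_mul_I_eq_sign _ _ hyR, cos_div_cos_add_mul_I _ _ _ hden, hsign, ofReal_exp]
  push_cast
  ring_nf

theorem tendsto_cosQuot {ν R a s : ℝ} {l : Filter ℝ} (hR : 0 < R)
    (h2 : Real.cos (a * R + ν * Real.pi / 2 + Real.pi / 4) ≠ 0)
    (hl : Tendsto (fun y => |y|) l atTop) (hs : ∀ᶠ y in l, y ≠ 0 ∧ Real.sign y = s) :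
    Tendsto (cosQuot ν R a) l (𝓝 (exp (I * s * ν * Real.pi))) := by
  have hr : Tendsto (fun y => (Real.exp (-2 * |y * R|) : ℂ)) l (𝓝 0) := by
    have h : Tendsto (fun y => 2 * (|y| * R)) l atTop :=
      (hl.atTop_mul_const hR).const_mul_atTop two_pos
    have := (continuous_ofReal.tendsto' 0 0 ofReal_zero).comp
      (Real.tendsto_exp_neg_atTop_nhds_zero.comp h)
    refine this.congr fun y => ?_
    simp [abs_mul, abs_of_pos hR]
  refine (tendsto_mul_one_add_div hr _
    (exp (I * s * ((2 * a * R - ν * Real.pi + Real.pi / 2 : ℝ) : ℂ)))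
    (exp (I * s * ((2 * a * R + ν * Real.pi + Real.pi / 2 : ℝ) : ℂ)))).congr' ?_
  filter_upwards [hs] with y ⟨hy, hsy⟩
  rw [cosQuot_eq hR h2 hy, hsy]

theorem stmt16_general (ν R a : ℝ) (hR : 0 < R)
    (h1 : Real.cos (a * R - ν * Real.pi / 2 + Real.pi / 4) ≠ 0)
    (h2 : Real.cos (a * R + ν * Real.pi / 2 + Real.pi / 4) ≠ 0) :
    (∀ y : ℝ, y ≠ 0 →
      cosQuot ν R a y =
        Complex.exp (Complex.I * ((Real.sign y : ℝ) : ℂ) * (ν : ℂ) * (Real.pi : ℂ)) *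
          (1 + (((Real.exp (-2 * |y * R|) : ℝ) : ℂ) *
                (Complex.exp (Complex.I * ((Real.sign y : ℝ) : ℂ) *
                    (((2 * a * R - ν * Real.pi + Real.pi / 2 : ℝ)) : ℂ)) -
                 Complex.exp (Complex.I * ((Real.sign y : ℝ) : ℂ) *
                    (((2 * a * R + ν * Real.pi + Real.pi / 2 : ℝ)) : ℂ)))) /
               (1 + ((Real.exp (-2 * |y * R|) : ℝ) : ℂ) *
                 Complex.exp (Complex.I * ((Real.sign y : ℝ) : ℂ) *
                    (((2 * a * R + ν * Real.pi + Real.pi / 2 : ℝ)) : ℂ))))) ∧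
    Tendsto (cosQuot ν R a) atTop
      (𝓝 (Complex.exp (Complex.I * (ν : ℂ) * (Real.pi : ℂ)))) ∧
    Tendsto (cosQuot ν R a) atBot
      (𝓝 (Complex.exp (-(Complex.I * (ν : ℂ) * (Real.pi : ℂ))))) ∧
    ∃ c₁ c₂ : ℝ, 0 < c₁ ∧ ∀ y : ℝ,
      c₁ ≤ ‖cosQuot ν R a y‖ ∧ ‖cosQuot ν R a y‖ ≤ c₂ := by
  have htop := tendsto_cosQuot (ν := ν) (a := a) hR h2 tendsto_abs_atTop_atTop
    ((eventually_gt_atTop 0).mono fun y hy => ⟨hy.ne', Real.sign_of_pos hy⟩)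
  have hbot := tendsto_cosQuot (ν := ν) (a := a) hR h2 tendsto_abs_atBot_atTop
    ((eventually_lt_atBot 0).mono fun y hy => ⟨hy.ne, Real.sign_of_neg hy⟩)
  rw [ofReal_one, mul_one] at htop
  rw [show I * ((-1 : ℝ) : ℂ) * ν * Real.pi = -(I * ν * Real.pi) by push_cast; ring] at hbot
  exact ⟨fun y hy => cosQuot_eq hR h2 hy, htop, hbot,
    (continuous_cosQuot h2).exists_pos_le_norm_le_of_tendsto (cosQuot_ne_zero h1 h2)
      (exp_ne_zero _) (exp_ne_zero _) htop hbot⟩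

/-- the explicit form of the cosine quotient on the line `Re z = a`, its limits
as `|Im z| → ∞`, and the resulting two-sided bounds on its modulus. -/
theorem stmt16 (ν R a : ℝ) (hν : ν ∈ Set.Ioo (0:ℝ) 1) (hR : 0 < R) (ha : 0 < a)
    (h1 : Real.cos (a * R - ν * Real.pi / 2 + Real.pi / 4) ≠ 0)
    (h2 : Real.cos (a * R + ν * Real.pi / 2 + Real.pi / 4) ≠ 0) :
    (∀ y : ℝ, y ≠ 0 →
      cosQuot ν R a y =
        Complex.exp (Complex.I * ((Real.sign y : ℝ) : ℂ) * (ν : ℂ) * (Real.pi : ℂ)) *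
          (1 + (((Real.exp (-2 * |y * R|) : ℝ) : ℂ) *
                (Complex.exp (Complex.I * ((Real.sign y : ℝ) : ℂ) *
                    (((2 * a * R - ν * Real.pi + Real.pi / 2 : ℝ)) : ℂ)) -
                 Complex.exp (Complex.I * ((Real.sign y : ℝ) : ℂ) *
                    (((2 * a * R + ν * Real.pi + Real.pi / 2 : ℝ)) : ℂ)))) /
               (1 + ((Real.exp (-2 * |y * R|) : ℝ) : ℂ) *
                 Complex.exp (Complex.I * ((Real.sign y : ℝ) : ℂ) *
                    (((2 * a * R + ν * Real.pi + Real.pi / 2 : ℝ)) : ℂ))))) ∧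
    Tendsto (cosQuot ν R a) atTop
      (𝓝 (Complex.exp (Complex.I * (ν : ℂ) * (Real.pi : ℂ)))) ∧
    Tendsto (cosQuot ν R a) atBot
      (𝓝 (Complex.exp (-(Complex.I * (ν : ℂ) * (Real.pi : ℂ))))) ∧
    ∃ c₁ c₂ : ℝ, 0 < c₁ ∧ ∀ y : ℝ,
      c₁ ≤ ‖cosQuot ν R a y‖ ∧ ‖cosQuot ν R a y‖ ≤ c₂ :=
  stmt16_general ν R a hR h1 h2
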